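/- Let M(𝒜,ℬ) be a principal group of directed automorphisms of a spherically homogeneous rooted tree T_m̄ with bounded valencies m̄ = (m_i), m_i ≥ 2, m_* = max_i m_i. Let 𝒢_n be the Schreier graph of the action of M(𝒜,ℬ) on the level-n vertices with generating set 𝒜 ∪ ℬ, i.e. the graph on the level-n vertices with conductances c(u,v) = #{s ∈ 𝒜 ∪ ℬ : u·s = v} for u ≠ v. Let r_n = 0⋯0 denote the all-zero level-n vertex (the root of 𝒢_n). Then there exists a constant c > 0, independent of n, such that for every n ≥ 1 and every x ∈ X_{m_n}∖{0}: Res_{𝒢_n}(r_n, x0⋯0) ≥ c·∏_{i=1}^n m_i/(m_i − 1) ≥ c·(m_*/(m_* − 1))^n, where x0⋯0 is a level-n word with the single non-zero letter x in the leading position. -/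

import Mathlib

open scoped ENNReal
namespace Paper
abbrev Vertex (m : ℕ → ℕ) (n : ℕ) := (i : Fin n) → Fin (m i)
variable {m : ℕ → ℕ}
def restr {n : ℕ} (w : Vertex m (n + 1)) : Vertex m n := fun i => w i.castSucc
def restrLe {n N : ℕ} (h : n ≤ N) (w : Vertex m N) : Vertex m n :=
  fun i => w ⟨i, lt_of_lt_of_le i.2 h⟩
def AutT (m : ℕ → ℕ) : Subgroup (∀ n, Equiv.Perm (Vertex m n)) where
  carrier := {g | ∀ (n : ℕ) (w : Vertex m (n + 1)), restr (g (n + 1) w) = g n (restr w)}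
  one_mem' := by intro n w; rfl
  mul_mem' := by
    intro a b ha hb n w
    show restr ((a (n+1)) ((b (n+1)) w)) = (a n) ((b n) (restr w))
    rw [ha, hb]
  inv_mem' := by
    intro a ha n w
    show restr ((a (n+1))⁻¹ w) = (a n)⁻¹ (restr w)
    apply (a n).injective
    have h1 := ha n ((a (n+1))⁻¹ w)
    have e1 : (a (n+1)) ((a (n+1))⁻¹ w) = w := (a (n+1)).apply_symm_apply w
    have e2 : (a n) ((a n)⁻¹ (restr w)) = restr w := (a n).apply_symm_apply _
    simp only [e1] at h1
    rw [← h1, e2]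
def app {n : ℕ} (g : AutT m) (v : Vertex m n) : Vertex m n := g.val n v
theorem restrLe_app (g : AutT m) : ∀ {N n : ℕ} (h : n ≤ N) (w : Vertex m N),
    restrLe h (g.val N w) = g.val n (restrLe h w) := by
  intro N
  induction N with
  | zero =>
    intro n h w
    have hn : n = 0 := Nat.le_zero.mp h
    subst hn; rfl
  | succ N ih =>
    intro n h w
    rcases Nat.eq_or_lt_of_le h with rfl | h'
    · rfl
    · have hN : n ≤ N := Nat.lt_succ_iff.mp h'
      calc restrLe h (g.val (N+1) w) = restrLe hN (restr (g.val (N+1) w)) := rfl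
        _ = restrLe hN (g.val N (restr w)) := by rw [g.prop N w]
        _ = g.val n (restrLe hN (restr w)) := ih hN _
        _ = g.val n (restrLe h w) := rfl
abbrev shift (m : ℕ → ℕ) (n : ℕ) : ℕ → ℕ := fun i => m (n + i)
def vappend {n k : ℕ} (v : Vertex (shift m n) k) (w : Vertex m n) : Vertex m (n + k) :=
  fun i => if h : (i : ℕ) < n then w ⟨i, h⟩
    else Fin.cast (congrArg m (by omega : n + ((i : ℕ) - n) = (i : ℕ)))
      (v ⟨(i : ℕ) - n, by omega⟩)
def topPart {n k : ℕ} (u : Vertex m (n + k)) : Vertex (shift m n) k :=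
  fun i => u ⟨n + i, by omega⟩

theorem topPart_vappend {n k : ℕ} (v : Vertex (shift m n) k) (w : Vertex m n) :
    topPart (vappend v w) = v := by
  funext i
  simp only [topPart, vappend, Fin.val_mk]
  rw [dif_neg (by omega)]
  apply Fin.ext
  simp only [Fin.coe_cast]
  exact congrArg (fun t : Fin k => (v t).1) (Fin.ext (by simp))

theorem restrLe_vappend {n k : ℕ} (v : Vertex (shift m n) k) (w : Vertex m n) :
    restrLe (Nat.le_add_right n k) (vappend v w) = w := by
  funext i
  simp only [restrLe, vappend, Fin.val_mk]
  rw [dif_pos i.2]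

theorem vappend_topPart {n k : ℕ} (u : Vertex m (n + k)) :
    vappend (topPart u) (restrLe (Nat.le_add_right n k) u) = u := by
  funext i
  by_cases h : (i : ℕ) < n
  · simp only [vappend, restrLe]
    rw [dif_pos h]
  · simp only [vappend, topPart, Fin.val_mk]
    rw [dif_neg h]
    apply Fin.ext
    simp only [Fin.coe_cast]
    exact congrArg (fun t : Fin (n+k) => (u t).1) (Fin.ext (by simp; omega))

theorem restr_vappend {n k : ℕ} (v : Vertex (shift m n) (k + 1)) (w : Vertex m n) :
    restr (n := n + k) (vappend (n := n) (k := k + 1) v w) = vappend (restr v) w := by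
  funext i
  by_cases h : (i : ℕ) < n
  · show vappend v w (Fin.castSucc i) = vappend (restr v) w i
    simp only [vappend]
    rw [dif_pos (show ((Fin.castSucc i : Fin (n+k+1)) : ℕ) < n from h), dif_pos h]
    rfl
  · show vappend v w (Fin.castSucc i) = vappend (restr v) w i
    simp only [vappend]
    rw [dif_neg (show ¬ ((Fin.castSucc i : Fin (n+k+1)) : ℕ) < n from h), dif_neg h]
    rfl

def secFun (g : AutT m) {n : ℕ} (w : Vertex m n) (k : ℕ)
    (v : Vertex (shift m n) k) : Vertex (shift m n) k :=
  topPart (g.val (n + k) (vappend v w))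

theorem secFun_spec (g : AutT m) {n : ℕ} (w : Vertex m n) (k : ℕ)
    (v : Vertex (shift m n) k) :
    g.val (n + k) (vappend v w) = vappend (secFun g w k v) (g.val n w) := by
  have h1 : restrLe (Nat.le_add_right n k) (g.val (n + k) (vappend v w)) = g.val n w := by
    rw [restrLe_app, restrLe_vappend]
  conv_lhs => rw [← vappend_topPart (g.val (n + k) (vappend v w))]
  rw [h1]
  rfl

theorem coe_inv_app (g : AutT m) (N : ℕ) (u : Vertex m N) :
    (g⁻¹ : AutT m).val N ((g : AutT m).val N u) = u := by
  have h : ((g⁻¹ : AutT m) : ∀ n, Equiv.Perm (Vertex m n)) = (↑g)⁻¹ := rfl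
  rw [h]
  exact Equiv.symm_apply_apply _ _

theorem secFun_left_inv (g : AutT m) {n : ℕ} (w : Vertex m n) (k : ℕ)
    (v : Vertex (shift m n) k) :
    secFun g⁻¹ (g.val n w) k (secFun g w k v) = v := by
  show topPart ((g⁻¹ : AutT m).val (n+k) (vappend (secFun g w k v) (g.val n w))) = v
  rw [← secFun_spec g w k v, coe_inv_app, topPart_vappend]

def sectionEquiv (g : AutT m) {n : ℕ} (w : Vertex m n) (k : ℕ) :
    Equiv.Perm (Vertex (shift m n) k) where
  toFun := secFun g w k
  invFun := secFun g⁻¹ (g.val n w) k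
  left_inv v := secFun_left_inv g w k v
  right_inv v := by
    have h2 : (g⁻¹ : AutT m)⁻¹ = g := inv_inv g
    have h3 : (g⁻¹ : AutT m).val n (g.val n w) = w := coe_inv_app g n w
    calc secFun g w k (secFun g⁻¹ (g.val n w) k v)
        = secFun (g⁻¹)⁻¹ ((g⁻¹ : AutT m).val n (g.val n w)) k
            (secFun g⁻¹ (g.val n w) k v) := by rw [h2, h3]
      _ = v := secFun_left_inv g⁻¹ (g.val n w) k v

theorem secFun_restr (g : AutT m) {n : ℕ} (w : Vertex m n) (k : ℕ)
    (v : Vertex (shift m n) (k + 1)) :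
    restr (secFun g w (k + 1) v) = secFun g w k (restr v) := by
  show restr (topPart (g.val (n + (k+1)) (vappend v w)))
      = topPart (g.val (n + k) (vappend (restr v) w))
  rw [← restr_vappend (n := n) (k := k) v w, ← g.prop (n + k) (vappend (n := n) (k := k + 1) v w)]
  rfl

/-- The section `g|_w` of a tree automorphism `g` at the level-`n` vertex `w`:
the unique automorphism of the shifted tree satisfying `(vw)·g = (v·g|_w)(w·g)`. -/
def sectionAut (g : AutT m) {n : ℕ} (w : Vertex m n) : AutT (shift m n) :=
  ⟨fun k => sectionEquiv g w k, fun k v => secFun_restr g w k v⟩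


/-! ### Distinguished vertices and predicates -/

/-- The level-`n` vertex `0⋯0` on the `0`-ray. -/
def rayV (hm : ∀ i, 0 < m i) (n : ℕ) : Vertex m n := fun i => ⟨0, hm i⟩

/-- The level-`(n+1)` neighbour `x0⋯0` of the `0`-ray: its only (possibly) non-zero
letter is the leading one, equal to `x`. -/
def nbrV (hm : ∀ i, 0 < m i) {n : ℕ} (x : Fin (m n)) : Vertex m (n + 1) :=
  fun i => if h : (i : ℕ) = n then Fin.cast (congrArg m h).symm x else ⟨0, hm i⟩

/-- The level-`n` vertex obtained from `w0` by prepending zeros. -/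
def padZero (hm : ∀ i, 0 < m i) {n₀ : ℕ} (w0 : Vertex m n₀) (n : ℕ) : Vertex m n :=
  fun i => if h : (i : ℕ) < n₀ then w0 ⟨i, h⟩ else ⟨0, hm i⟩

/-- The level-`(n+1)` vertex `x0⋯0w0`: the word `w0` at the bottom, the letter `x`
in the leading position, and zeros in between. -/
def padLead (hm : ∀ i, 0 < m i) {n₀ : ℕ} (w0 : Vertex m n₀) {n : ℕ} (x : Fin (m n)) :
    Vertex m (n + 1) :=
  fun i => if h : (i : ℕ) < n₀ then w0 ⟨i, h⟩
    else if h2 : (i : ℕ) = n then Fin.cast (congrArg m h2).symm x else ⟨0, hm i⟩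

/-- `w` lies on the `0`-ray. -/
def OnRay {n : ℕ} (w : Vertex m n) : Prop := ∀ i, (w i : ℕ) = 0

/-- `w` is a neighbour of the `0`-ray: its leading letter is non-zero and all other
letters are zero. -/
def IsNbr {n : ℕ} (w : Vertex m n) : Prop :=
  ∃ hn : 0 < n, (w ⟨n - 1, by omega⟩ : ℕ) ≠ 0 ∧
    ∀ i : Fin n, (i : ℕ) < n - 1 → (w i : ℕ) = 0

/-- A *rooted* automorphism: it permutes the first level and all its sections at
vertices of level `≥ 1` are trivial (i.e. it is an element of `Sym(X_{m_1})`). -/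
def IsRooted (g : AutT m) : Prop :=
  ∀ (n : ℕ) (w : Vertex m n), 0 < n → sectionAut g w = 1

/-- A *directed automorphism along the `0`-ray* (an element of `H_m̄`): it fixes the
`0`-ray, its sections away from the ray and its neighbours are trivial, and its
sections at neighbours of the ray are rooted. -/
def IsDirectedAut (g : AutT m) : Prop :=
  (∀ (n : ℕ) (w : Vertex m n), OnRay w → g.val n w = w) ∧
  (∀ (n : ℕ) (w : Vertex m n), ¬ OnRay w → ¬ IsNbr w → sectionAut g w = 1) ∧
  (∀ (n : ℕ) (w : Vertex m n), IsNbr w → IsRooted (sectionAut g w))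

/-- The group `𝒜_n` of `n`-th level sections of `𝒜` along the `0`-ray. -/
def Asub (hm : ∀ i, 0 < m i) (A : Subgroup (AutT m)) (n : ℕ) :
    Subgroup (AutT (shift m n)) :=
  Subgroup.closure {h | ∃ a ∈ A, h = sectionAut a (rayV hm n)}

/-- The group `ℬ_n` generated by the `n`-th level sections of `𝒜` at the neighbours
of the `0`-ray (trivial for `n = 0`, where there are no neighbours). -/
def Bsub (hm : ∀ i, 0 < m i) (A : Subgroup (AutT m)) : (n : ℕ) → Subgroup (AutT (shift m n))
  | 0 => ⊥
  | (k + 1) =>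
    Subgroup.closure {h | ∃ a ∈ A, ∃ x : Fin (m k), (x : ℕ) ≠ 0 ∧ h = sectionAut a (nbrV hm x)}

/-- The condition, for a word `w`, that position `i` is the position situated just
above the lowest non-zero letter of `w`. -/
def SpineCond {n : ℕ} (w : Vertex m n) (i : Fin n) : Prop :=
  ∃ p : Fin n, (w p : ℕ) ≠ 0 ∧ (∀ q : Fin n, (q : ℕ) < (p : ℕ) → (w q : ℕ) = 0) ∧
    (i : ℕ) = (p : ℕ) + 1

open Classical in
/-- The action of the spine-permutation automorphism `h_σ̄`: the letter just above
the lowest non-zero letter is permuted (by the permutation attached to its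
alphabet size); all-zero words are fixed. -/
noncomputable def spineFun (σ : ∀ j : ℕ, Equiv.Perm (Fin j)) {n : ℕ} (w : Vertex m n) :
    Vertex m n :=
  fun i => if SpineCond w i then (σ (m i)) (w i) else w i

/-! ### Probability measures, entropy, random walks -/

/-- `μ` is a probability measure (given by its density on a discrete group/set). -/
def IsProbMeas {G : Type*} (μ : G → ℝ) : Prop := (∀ g, 0 ≤ μ g) ∧ HasSum μ 1

/-- `μ` is symmetric. -/
def IsSymmMeas {G : Type*} [Group G] (μ : G → ℝ) : Prop := ∀ g, μ g⁻¹ = μ g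

/-- Convolution of two measures on a discrete group. -/
noncomputable def conv {G : Type*} [Group G] (μ ν : G → ℝ) : G → ℝ :=
  fun g => ∑' h, μ h * ν (h⁻¹ * g)

open Classical in
/-- `k`-fold convolution power `μ^{*k}` (with `μ^{*0} = δ_e`). -/
noncomputable def convPow {G : Type*} [Group G] (μ : G → ℝ) : ℕ → G → ℝ
  | 0 => fun g => if g = 1 then 1 else 0
  | (k + 1) => conv μ (convPow μ k)

/-- Shannon entropy `H(p) = -∑ p log p` of a discrete measure. -/
noncomputable def entropy {X : Type*} (p : X → ℝ) : ℝ := ∑' x, Real.negMulLog (p x)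

/-- Shannon entropy, valued in `ℝ≥0∞`. -/
noncomputable def entropyE {X : Type*} (p : X → ℝ) : ℝ≥0∞ :=
  ∑' x, ENNReal.ofReal (Real.negMulLog (p x))

/-- The Liouville property: every bounded `μ`-harmonic function is constant on the
subgroup generated by the support of `μ`. -/
def IsLiouville {G : Type*} [Group G] (μ : G → ℝ) : Prop :=
  ∀ f : G → ℝ, (∃ C, ∀ g, |f g| ≤ C) → (∀ g, f g = ∑' h, f (g * h) * μ h) →
    ∀ g ∈ Subgroup.closure (Function.support μ),
      ∀ h ∈ Subgroup.closure (Function.support μ), f g = f h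

/-- The position of the right random walk after `t` steps, as a function of the
increments `s 0, s 1, …` (the group element `s_t ⋯ s_2 s_1`; with this convention,
applying it to a point `x` performs the corresponding right walk on any space the
group acts on from the right). -/
def rwProd {G : Type*} [Group G] {k : ℕ} (s : Fin k → G) (t : ℕ) : G :=
  (((List.ofFn s).take t).reverse).prod

open Classical in
/-- The law of the pair (section/position) of the right `μ`-random walk observed at
the `j`-th visit of the trajectory `v·g_1, v·g_2, …` to the set `W`:
`visitLaw μ act v W sec j (h, u) = P(g at j-th visit has sec = h and position = u)`.
Here `act` is the (right) action used for the trajectory and `sec` the observable. -/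
noncomputable def visitLaw {G X H : Type*} [Group G] (μ : G → ℝ)
    (act : G → X → X) (v : X) (W : Set X) (sec : G → H) (j : ℕ) : H × X → ℝ :=
  fun p =>
    ∑' k : ℕ, ∑' s : Fin k → G,
      (∏ i, μ (s i)) *
        (if ((Finset.range k).filter fun t => act (rwProd s (t + 1)) v ∈ W).card = j
            ∧ act (rwProd s k) v ∈ W
            ∧ (sec (rwProd s k), act (rwProd s k) v) = p
          then 1 else 0)

/-! ### Electrical networks -/

/-- The Dirichlet energy of `f` with respect to the symmetric conductances `c`. -/
noncomputable def dirichlet {V : Type*} [Fintype V] (c : V → V → ℝ) (f : V → ℝ) : ℝ :=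
  (1 / 2) * ∑ u : V, ∑ v : V, c u v * (f u - f v) ^ 2

/-- Effective conductance between the disjoint vertex sets `A` and `B`. -/
noncomputable def effCond {V : Type*} [Fintype V] (c : V → V → ℝ) (A B : Set V) : ℝ :=
  sInf (dirichlet c '' {f | (∀ a ∈ A, f a = 1) ∧ (∀ b ∈ B, f b = 0)})

/-- Effective resistance between `A` and `B`, valued in `ℝ≥0∞` (infinite when the
effective conductance vanishes). -/
noncomputable def effResE {V : Type*} [Fintype V] (c : V → V → ℝ) (A B : Set V) : ℝ≥0∞ :=
  (ENNReal.ofReal (effCond c A B))⁻¹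

open Classical in
/-- Conductances of the Schreier graph of the action on level `n` with (multi-)edges
given by a generating set: `c u v = #{s ∈ gens : u·s = v}` for `u ≠ v`. -/
noncomputable def schreierCond (gens : Set (AutT m)) (n : ℕ) :
    Vertex m n → Vertex m n → ℝ :=
  fun u v => if u = v then 0 else (Set.ncard {s | s ∈ gens ∧ app s u = v} : ℝ)

open Classical in
/-- Conductances of the Schreier graph of the action on level `n`, with weights
`κ s` on the edge corresponding to the generator `s`. -/
noncomputable def schreierCondWt (S : Finset (AutT m)) (κ : AutT m → ℝ) (n : ℕ) :
    Vertex m n → Vertex m n → ℝ :=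
  fun u v => if u = v then 0 else ∑ s ∈ S.filter (fun s => app s u = v), κ s

/-- The set `𝔸_n` of level-`n` vertices where some generator `s ∈ S` has a
non-trivial section lying in `𝒜_n`. -/
def ASet (hm : ∀ i, 0 < m i) (A : Subgroup (AutT m)) (S : Finset (AutT m)) (n : ℕ) :
    Set (Vertex m n) :=
  {w | ∃ s ∈ S, sectionAut s w ∈ Asub hm A n ∧ sectionAut s w ≠ 1}

/-- The set `𝔹_n` of level-`n` vertices where some generator `s ∈ S` has a
non-trivial section lying in `ℬ_n`. -/
def BSet (hm : ∀ i, 0 < m i) (A : Subgroup (AutT m)) (S : Finset (AutT m)) (n : ℕ) :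
    Set (Vertex m n) :=
  {w | ∃ s ∈ S, sectionAut s w ∈ Bsub hm A n ∧ sectionAut s w ≠ 1}

/-- The orbit of a level-`n` vertex under a subgroup `G ≤ Aut(T_m)`. -/
def orbitOf (G : Subgroup (AutT m)) {n : ℕ} (v : Vertex m n) : Set (Vertex m n) :=
  {u | ∃ g : AutT m, g ∈ G ∧ app g v = u}

/-! ### Regular trees and automata -/

/-- The constant valency sequence (regular rooted tree `T_mm`). -/
abbrev constSeq (mm : ℕ) : ℕ → ℕ := fun _ => mm


/-- An invertible automaton over the alphabet of a regular tree: a finite set of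
automorphisms closed under taking sections at one-letter words. -/
def IsAutomaton {mm : ℕ} (A : Finset (AutT (constSeq mm))) : Prop :=
  ∀ a ∈ A, ∀ x : Vertex (constSeq mm) 1, sectionAut a x ∈ A

/-- Bounded activity: for every state `a`, the number of level-`n` words with
non-trivial section is bounded uniformly in `n`. -/
def IsBoundedActivity {mm : ℕ} (A : Finset (AutT (constSeq mm))) : Prop :=
  ∀ a ∈ A, ∃ B : ℕ, ∀ n : ℕ,
    Set.ncard {w : Vertex (constSeq mm) n | sectionAut a w ≠ 1} ≤ B

/-- Word length with respect to a finite symmetric generating set. -/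
noncomputable def wordLen {G : Type*} [Group G] (S : Set G) (g : G) : ℕ :=
  sInf {k | ∃ l : List G, l.length = k ∧ (∀ s ∈ l, s ∈ S) ∧ l.prod = g}


/-!
By the Dirichlet principle it suffices to exhibit a potential on level `n` that is `1` at
`0⋯0`, `0` at `x0⋯0`, and has energy `O(∏ (m_i - 1)/m_i)`. Take
`F(x_n⋯x_1) = 1/m_n + s_n(x_n) F(x_{n-1}⋯x_1)` with `s_i(0) = 1 - 1/m_i` and
`s_i(y) = -1/m_i` for `y ≠ 0`. Then `F = 1` on the `0`-ray and `F = 0` at its neighbours.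
A directed automorphism fixes the ray, permutes its neighbours, and otherwise changes only the
letter just above a neighbour prefix `v`, which `F` does not see since `F(v) = 0`; so the
edges of `𝒜` carry no energy. A rooted generator changes only `x_1`, and since
`∑_y s_i(y)^2 = (m_i - 1)/m_i`, its edges carry energy at most `m_1 ∏_{i ≥ 2} (m_i - 1)/m_i`.
-/

section Network

variable {V : Type*} [Fintype V] {c : V → V → ℝ}

theorem dirichlet_nonneg (hc : ∀ u v, 0 ≤ c u v) (f : V → ℝ) : 0 ≤ dirichlet c f :=
  mul_nonneg (by norm_num) <| Finset.sum_nonneg fun u _ =>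
    Finset.sum_nonneg fun v _ => mul_nonneg (hc u v) (sq_nonneg _)

theorem effCond_le_dirichlet (hc : ∀ u v, 0 ≤ c u v) {A B : Set V} {f : V → ℝ}
    (hA : ∀ a ∈ A, f a = 1) (hB : ∀ b ∈ B, f b = 0) : effCond c A B ≤ dirichlet c f :=
  csInf_le ⟨0, by rintro _ ⟨g, -, rfl⟩; exact dirichlet_nonneg hc g⟩
    ⟨f, ⟨hA, hB⟩, rfl⟩

theorem ofReal_inv_le_effResE (hc : ∀ u v, 0 ≤ c u v) {A B : Set V} {f : V → ℝ}
    (hA : ∀ a ∈ A, f a = 1) (hB : ∀ b ∈ B, f b = 0) {E : ℝ} (hE : 0 < E)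
    (hfE : dirichlet c f ≤ E) : ENNReal.ofReal E⁻¹ ≤ effResE c A B := by
  rw [effResE, ENNReal.ofReal_inv_of_pos hE]
  exact ENNReal.inv_le_inv.mpr
    (ENNReal.ofReal_le_ofReal ((effCond_le_dirichlet hc hA hB).trans hfE))

end Network

theorem schreierCond_nonneg (gens : Set (AutT m)) (n : ℕ) (u v : Vertex m n) :
    0 ≤ schreierCond gens n u v := by
  unfold schreierCond
  split_ifs <;> positivity

theorem dirichlet_schreierCond (S : Finset (AutT m)) (n : ℕ) (f : Vertex m n → ℝ) :
    dirichlet (schreierCond (S : Set (AutT m)) n) f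
      = (1 / 2) * ∑ s ∈ S, ∑ u, (f u - f (app s u)) ^ 2 := by
  classical
  -- Loops `u·s = u` carry conductance `0`, but they contribute nothing anyway.
  rw [dirichlet, Finset.sum_comm (s := S)]
  congr 1
  refine Finset.sum_congr rfl fun u _ => ?_
  rw [← Finset.sum_fiberwise' S (fun s => app s u) (fun v => (f u - f v) ^ 2)]
  refine Finset.sum_congr rfl fun v _ => ?_
  rw [Finset.sum_const, nsmul_eq_mul, schreierCond]
  split_ifs with huv
  · simp [huv]
  · congr 2
    rw [← Set.ncard_coe_finset, Finset.coe_filter]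
    rfl

theorem onRay_succ_iff {N : ℕ} {w : Vertex m (N + 1)} :
    OnRay w ↔ OnRay (restr w) ∧ (w (Fin.last N) : ℕ) = 0 := by
  refine ⟨fun h => ⟨fun i => h _, h _⟩, fun ⟨h, hlast⟩ i => ?_⟩
  cases i using Fin.lastCases with
  | last => exact hlast
  | cast j => exact h j

theorem onRay_of_onRay_app {g : AutT m} {N : ℕ}
    (hfix : ∀ v : Vertex m N, OnRay v → g.val N v = v) {w : Vertex m N}
    (h : OnRay (g.val N w)) : OnRay w := by
  rwa [(g.val N).injective (hfix _ h)] at h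

theorem isNbr_nbrV (hm : ∀ i, 0 < m i) {n : ℕ} {x : Fin (m n)} (hx : (x : ℕ) ≠ 0) :
    IsNbr (nbrV hm x) := by
  refine ⟨n.succ_pos, by simpa [nbrV] using hx, fun i hi => ?_⟩
  simp [nbrV, show (i : ℕ) ≠ n by omega]

theorem topPart_app_of_sectionAut_eq_one (g : AutT m) {n k : ℕ} (w : Vertex m (n + k))
    (hg : sectionAut g (restrLe (Nat.le_add_right n k) w) = 1) :
    topPart (g.val (n + k) w) = topPart w := by
  conv_lhs => rw [← vappend_topPart w, secFun_spec, topPart_vappend]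
  exact congrArg (fun h : AutT (shift m n) => h.val k (topPart w)) hg

theorem app_last_of_sectionAut_eq_one (g : AutT m) {N : ℕ} (w : Vertex m (N + 1))
    (hg : sectionAut g (restr w) = 1) : g.val (N + 1) w (Fin.last N) = w (Fin.last N) :=
  congrFun (topPart_app_of_sectionAut_eq_one g w hg) 0

noncomputable def letterWeight (m : ℕ → ℕ) (i y : ℕ) : ℝ :=
  if y = 0 then 1 - (m i : ℝ)⁻¹ else -(m i : ℝ)⁻¹

-- `w (Fin.last N)` is the leading letter `x_{N+1}` of `w`, and `m N` is the paper's `m_{N+1}`.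
noncomputable def rootPotential : (N : ℕ) → Vertex m N → ℝ
  | 0, _ => 1
  | N + 1, w => (m N : ℝ)⁻¹ + letterWeight m N (w (Fin.last N)) * rootPotential N (restr w)

theorem rootPotential_succ {N : ℕ} (w : Vertex m (N + 1)) :
    rootPotential (N + 1) w
      = (m N : ℝ)⁻¹ + letterWeight m N (w (Fin.last N)) * rootPotential N (restr w) := rfl

theorem inv_add_letterWeight (i y : ℕ) :
    (m i : ℝ)⁻¹ + letterWeight m i y = if y = 0 then 1 else 0 := by
  unfold letterWeight
  split_ifs <;> ring

theorem sum_letterWeight_sq (i : ℕ) :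
    ∑ y : Fin (m i), letterWeight m i y ^ 2 = ((m i : ℝ) - 1) / m i := by
  rcases Nat.eq_zero_or_pos (m i) with h | h
  · have : IsEmpty (Fin (m i)) := by rw [h]; infer_instance
    simp [h]
  · have : NeZero (m i) := ⟨h.ne'⟩
    rw [← Finset.add_sum_erase _ _ (Finset.mem_univ 0)]
    have hrest : ∀ y ∈ Finset.univ.erase (0 : Fin (m i)),
        letterWeight m i y ^ 2 = (m i : ℝ)⁻¹ ^ 2 := fun y hy => by
      rw [letterWeight, if_neg (Fin.val_ne_zero_iff.2 (Finset.ne_of_mem_erase hy))]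
      ring
    rw [Finset.sum_congr rfl hrest, Finset.sum_const, Finset.card_erase_of_mem (Finset.mem_univ _),
      Finset.card_univ, Fintype.card_fin, letterWeight, Fin.val_zero, if_pos rfl, nsmul_eq_mul,
      Nat.cast_sub h]
    field_simp
    ring

theorem rootPotential_succ_of_restr_eq_one {N : ℕ} {w : Vertex m (N + 1)}
    (h : rootPotential N (restr w) = 1) :
    rootPotential (N + 1) w = if (w (Fin.last N) : ℕ) = 0 then 1 else 0 := by
  rw [rootPotential_succ, h, mul_one, inv_add_letterWeight]

theorem rootPotential_of_onRay : ∀ {N : ℕ} {w : Vertex m N}, OnRay w → rootPotential N w = 1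
  | 0, _, _ => rfl
  | _ + 1, _, h => by
    rw [rootPotential_succ_of_restr_eq_one (rootPotential_of_onRay (onRay_succ_iff.1 h).1),
      if_pos (onRay_succ_iff.1 h).2]

theorem rootPotential_of_isNbr {N : ℕ} {w : Vertex m N} (h : IsNbr w) :
    rootPotential N w = 0 := by
  obtain ⟨hN, hlast, hlow⟩ := h
  obtain ⟨K, rfl⟩ : ∃ K, N = K + 1 := ⟨N - 1, by omega⟩
  have hray : OnRay (restr w) := fun i => hlow _ (by simp)
  rw [rootPotential_succ_of_restr_eq_one (rootPotential_of_onRay hray)]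
  exact if_neg hlast

theorem rootPotential_app_succ {g : AutT m} {N : ℕ} {w : Vertex m (N + 1)}
    (hg : sectionAut g (restr w) = 1) :
    rootPotential (N + 1) (g.val (N + 1) w)
      = (m N : ℝ)⁻¹
        + letterWeight m N (w (Fin.last N)) * rootPotential N (g.val N (restr w)) := by
  rw [rootPotential_succ, app_last_of_sectionAut_eq_one g w hg, g.prop N w]

theorem rootPotential_app_of_isDirectedAut {a : AutT m} (ha : IsDirectedAut a) :
    ∀ (N : ℕ) (w : Vertex m N), rootPotential N (a.val N w) = rootPotential N w
  | 0, _ => rfl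
  | N + 1, w => by
    have hfix := ha.1
    have hrestr : restr (a.val (N + 1) w) = a.val N (restr w) := a.prop N w
    by_cases hray : OnRay (restr w)
    · have hray' : OnRay (restr (a.val (N + 1) w)) := by rwa [hrestr, hfix N _ hray]
      have hlast : OnRay (a.val (N + 1) w) ↔ OnRay w :=
        ⟨onRay_of_onRay_app (hfix _), fun h => by rwa [hfix _ _ h]⟩
      rw [onRay_succ_iff, onRay_succ_iff, and_iff_right hray', and_iff_right hray] at hlast
      rw [rootPotential_succ_of_restr_eq_one (rootPotential_of_onRay hray),
        rootPotential_succ_of_restr_eq_one (rootPotential_of_onRay hray'), if_congr hlast rfl rfl]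
    · by_cases hnbr : IsNbr (restr w)
      · rw [rootPotential_succ, rootPotential_succ, hrestr,
          rootPotential_app_of_isDirectedAut ha N, rootPotential_of_isNbr hnbr, mul_zero, mul_zero]
      · rw [rootPotential_app_succ (ha.2.1 N _ hray hnbr), rootPotential_app_of_isDirectedAut ha N,
          rootPotential_succ]

theorem sum_vertex_succ {N : ℕ} (φ : Fin (m N) → Vertex m N → ℝ) :
    ∑ w : Vertex m (N + 1), φ (w (Fin.last N)) (restr w) = ∑ y, ∑ v, φ y v := by
  rw [← Fintype.sum_prod_type']
  exact (Fin.snocEquiv (fun i : Fin (N + 1) => Fin (m i))).symm.sum_comp (fun p => φ p.1 p.2)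

noncomputable def edgeEnergy (g : AutT m) (N : ℕ) : ℝ :=
  ∑ w : Vertex m N, (rootPotential N w - rootPotential N (g.val N w)) ^ 2

theorem edgeEnergy_succ {g : AutT m} {N : ℕ} (hg : ∀ v : Vertex m N, sectionAut g v = 1) :
    edgeEnergy g (N + 1) = ((m N : ℝ) - 1) / m N * edgeEnergy g N := by
  have hterm (w : Vertex m (N + 1)) :
      (rootPotential (N + 1) w - rootPotential (N + 1) (g.val (N + 1) w)) ^ 2
        = letterWeight m N (w (Fin.last N)) ^ 2
          * (rootPotential N (restr w) - rootPotential N (g.val N (restr w))) ^ 2 := by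
    rw [rootPotential_app_succ (hg _), rootPotential_succ]
    ring
  rw [edgeEnergy, Finset.sum_congr rfl fun w _ => hterm w,
    sum_vertex_succ fun y v => letterWeight m N y ^ 2
      * (rootPotential N v - rootPotential N (g.val N v)) ^ 2,
    ← Finset.sum_mul_sum, sum_letterWeight_sq, edgeEnergy]

theorem edgeEnergy_of_isRooted {b : AutT m} (hb : IsRooted b) (n : ℕ) :
    edgeEnergy b (n + 1)
      = (∏ i ∈ Finset.Ico 1 (n + 1), ((m i : ℝ) - 1) / m i) * edgeEnergy b 1 := by
  induction n with
  | zero => simp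
  | succ n ih =>
    rw [edgeEnergy_succ fun v => hb _ v n.succ_pos, ih,
      Finset.prod_Ico_succ_top (show 1 ≤ n + 1 by omega)]
    ring

theorem edgeEnergy_one_le (g : AutT m) : edgeEnergy g 1 ≤ m 0 := by
  have hF (w : Vertex m 1) : rootPotential 1 w = if (w (Fin.last 0) : ℕ) = 0 then 1 else 0 :=
    rootPotential_succ_of_restr_eq_one rfl
  calc edgeEnergy g 1 ≤ ∑ _w : Vertex m 1, (1 : ℝ) :=
        Finset.sum_le_sum fun w _ => by rw [hF, hF]; split_ifs <;> norm_num
    _ = m 0 := by simp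

theorem sub_one_div_self_nonneg (k : ℕ) : 0 ≤ ((k : ℝ) - 1) / k := by
  rcases Nat.eq_zero_or_pos k with rfl | hk
  · simp
  · exact div_nonneg (sub_nonneg.2 (Nat.one_le_cast.2 hk)) k.cast_nonneg

theorem edgeEnergy_le {s : AutT m} (hs : IsDirectedAut s ∨ IsRooted s) (n : ℕ) :
    edgeEnergy s (n + 1) ≤ m 0 * ∏ i ∈ Finset.Ico 1 (n + 1), ((m i : ℝ) - 1) / m i := by
  have hprod := Finset.prod_nonneg fun i (_ : i ∈ Finset.Ico 1 (n + 1)) =>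
    sub_one_div_self_nonneg (m i)
  rcases hs with ha | hb
  · simp only [edgeEnergy, rootPotential_app_of_isDirectedAut ha, sub_self, sq, mul_zero,
      Finset.sum_const_zero]
    positivity
  · rw [edgeEnergy_of_isRooted hb, mul_comm]
    exact mul_le_mul_of_nonneg_right (edgeEnergy_one_le s) hprod

theorem dirichlet_rootPotential_le (hm2 : ∀ i, 2 ≤ m i) (S : Finset (AutT m))
    (hS : ∀ s ∈ S, IsDirectedAut s ∨ IsRooted s) (n : ℕ) :
    dirichlet (schreierCond (S : Set (AutT m)) (n + 1)) (rootPotential (n + 1))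
      ≤ S.card * m 0 * ∏ i ∈ Finset.range (n + 1), ((m i : ℝ) - 1) / m i := by
  set P := ∏ i ∈ Finset.Ico 1 (n + 1), ((m i : ℝ) - 1) / m i
  have hP : 0 ≤ P := Finset.prod_nonneg fun i _ => sub_one_div_self_nonneg (m i)
  have hm0 : (2 : ℝ) ≤ m 0 := by exact_mod_cast hm2 0
  rw [Finset.range_eq_Ico, Finset.prod_eq_prod_Ico_succ_bot n.succ_pos, dirichlet_schreierCond]
  calc (1 / 2) * ∑ s ∈ S, edgeEnergy s (n + 1)
      ≤ (1 / 2) * ∑ s ∈ S, m 0 * P := by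
        gcongr with s hs
        exact edgeEnergy_le (hS s hs) n
    _ = S.card * (m 0 / 2) * P := by rw [Finset.sum_const, nsmul_eq_mul]; ring
    _ ≤ S.card * ((m 0 : ℝ) - 1) * P := by gcongr; linarith
    _ = S.card * m 0 * (((m 0 : ℝ) - 1) / m 0 * P) := by field_simp

theorem pow_le_prod_div_sub_one {M : ℕ} (hm2 : ∀ i, 2 ≤ m i) (hub : ∀ i, m i ≤ M) (n : ℕ) :
    ((M : ℝ) / ((M : ℝ) - 1)) ^ n ≤ ∏ i ∈ Finset.range n, (m i : ℝ) / ((m i : ℝ) - 1) := by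
  rw [Finset.pow_eq_prod_const]
  refine Finset.prod_le_prod (fun i _ => ?_) (fun i _ => ?_)
  · have : (2 : ℝ) ≤ M := by exact_mod_cast (hm2 i).trans (hub i)
    exact div_nonneg (by linarith) (by linarith)
  · have hi : (2 : ℝ) ≤ m i := by exact_mod_cast hm2 i
    have hiM : (m i : ℝ) ≤ M := by exact_mod_cast hub i
    rw [div_le_div_iff₀ (by linarith) (by linarith)]
    linarith

theorem resistance_root_antiroot_lower_bound_general
    (m : ℕ → ℕ) (hm : ∀ i, 0 < m i) (hm2 : ∀ i, 2 ≤ m i)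
    (mstar : ℕ) (hub : ∀ i, m i ≤ mstar)
    (A B : Subgroup (AutT m))
    (hAfin : (A : Set (AutT m)).Finite) (hAdir : ∀ a ∈ A, IsDirectedAut a)
    (hBfin : (B : Set (AutT m)).Finite) (hBrooted : ∀ b ∈ B, IsRooted b) :
    ∃ c : ℝ, 0 < c ∧ ∀ n : ℕ, ∀ x : Fin (m n), (x : ℕ) ≠ 0 →
      ENNReal.ofReal (c * ∏ i ∈ Finset.range (n + 1), ((m i : ℝ) / ((m i : ℝ) - 1)))
          ≤ effResE
              (schreierCond ((A : Set (AutT m)) ∪ (B : Set (AutT m))) (n + 1))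
              {rayV hm (n + 1)} {nbrV hm x}
        ∧ c * ((mstar : ℝ) / ((mstar : ℝ) - 1)) ^ (n + 1)
            ≤ c * ∏ i ∈ Finset.range (n + 1), ((m i : ℝ) / ((m i : ℝ) - 1)) := by
  classical
  set S := hAfin.toFinset ∪ hBfin.toFinset
  have hgens : (A : Set (AutT m)) ∪ B = S := by simp [S]
  have hS : ∀ s ∈ S, IsDirectedAut s ∨ IsRooted s := fun s hs => by
    simp only [S, Finset.mem_union, Set.Finite.mem_toFinset, SetLike.mem_coe] at hs
    exact hs.imp (hAdir s) (hBrooted s)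
  have hcard : 0 < S.card := Finset.card_pos.2 ⟨1, by simp [S]⟩
  refine ⟨((S.card : ℝ) * m 0)⁻¹, by have := hm 0; positivity, fun n x hx => ⟨?_, ?_⟩⟩
  · have hQ : 0 < ∏ i ∈ Finset.range (n + 1), ((m i : ℝ) - 1) / m i :=
      Finset.prod_pos fun i _ => div_pos (sub_pos.2 (Nat.one_lt_cast.2 (hm2 i))) (by simp [hm i])
    have hprod : ∏ i ∈ Finset.range (n + 1), (m i : ℝ) / ((m i : ℝ) - 1)
        = (∏ i ∈ Finset.range (n + 1), ((m i : ℝ) - 1) / m i)⁻¹ := by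
      rw [← Finset.prod_inv_distrib]
      simp_rw [inv_div]
    rw [hprod, ← mul_inv, hgens]
    refine ofReal_inv_le_effResE (schreierCond_nonneg _ _) ?_ ?_
      (by have := hm 0; positivity) (dirichlet_rootPotential_le hm2 S hS n)
    · rintro _ rfl
      exact rootPotential_of_onRay fun _ => rfl
    · rintro _ rfl
      exact rootPotential_of_isNbr (isNbr_nbrV hm hx)
  · exact mul_le_mul_of_nonneg_left (pow_le_prod_div_sub_one hm2 hub (n + 1)) (by positivity)

/-- In the Schreier graphs `𝒢_n` of `M(𝒜,ℬ)` acting on the levels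
of the tree with generating set `𝒜 ∪ ℬ`, the effective resistance between the root
`0⋯0` and any anti-root `x0⋯0` (`x ≠ 0`) is at least `c·∏_{i=1}^n m_i/(m_i-1)`,
which in turn is at least `c·(m_*/(m_*-1))^n`. -/
theorem resistance_root_antiroot_lower_bound
    (m : ℕ → ℕ) (hm : ∀ i, 0 < m i) (hm2 : ∀ i, 2 ≤ m i)
    (mstar : ℕ) (hub : ∀ i, m i ≤ mstar) (hatt : ∃ i, m i = mstar)
    (A B : Subgroup (AutT m))
    (hAfin : (A : Set (AutT m)).Finite) (hAdir : ∀ a ∈ A, IsDirectedAut a)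
    (hBfin : (B : Set (AutT m)).Finite) (hBrooted : ∀ b ∈ B, IsRooted b) :
    ∃ c : ℝ, 0 < c ∧ ∀ n : ℕ, ∀ x : Fin (m n), (x : ℕ) ≠ 0 →
      ENNReal.ofReal (c * ∏ i ∈ Finset.range (n + 1), ((m i : ℝ) / ((m i : ℝ) - 1)))
          ≤ effResE
              (schreierCond ((A : Set (AutT m)) ∪ (B : Set (AutT m))) (n + 1))
              {rayV hm (n + 1)} {nbrV hm x}
        ∧ c * ((mstar : ℝ) / ((mstar : ℝ) - 1)) ^ (n + 1)
            ≤ c * ∏ i ∈ Finset.range (n + 1), ((m i : ℝ) / ((m i : ℝ) - 1)) :=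
  resistance_root_antiroot_lower_bound_general m hm hm2 mstar hub A B hAfin hAdir hBfin hBrooted

end Paper
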